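/- arXiv:2408.15687 — 2 statements merged into one kernel-verified Lean document; each statement's English description precedes it below -/
import Mathlib

section
/- Let λ be a σ-finite measure on ℝ^d and let h ∈ L²(λ) be nonzero. Let u(μ) = g(μ(f₁),…,μ(f_n)) be a cylindrical function with g ∈ C¹_b(ℝⁿ), f_i ∈ C_b(ℝ^d), viewed on probability measures, and let Ψ(h) := h²λ/λ(h²). Then u∘Ψ is Fréchet differentiable at h with ∇(u∘Ψ)(h) = (2h/‖h‖²_{L²(λ)}) · D̃^E u(Ψ(h)), where D̃^E u(μ)(x) = Σᵢ ∂_i g(μ(f₁),…,μ(f_n))·(f_i(x) − μ(f_i)). -/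
open MeasureTheory Filter BoundedContinuousFunction
open scoped InnerProductSpace ENNReal

set_option synthInstance.maxHeartbeats 1000000
set_option maxHeartbeats 1000000
set_option linter.unusedSectionVars false
set_option linter.unusedVariables false

section aux
variable {α : Type*} [MeasurableSpace α] [TopologicalSpace α] [OpensMeasurableSpace α]
  {μ : Measure α}

lemma memA (fb : α →ᵇ ℝ) (k : Lp ℝ 2 μ) : MemLp (fun x => fb x * (k : α → ℝ) x) 2 μ := by
  refine (Lp.memLp k).of_le_mul (c := ‖fb‖)
    (fb.continuous.aestronglyMeasurable.mul (Lp.aestronglyMeasurable k))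
    (Filter.Eventually.of_forall fun x => ?_)
  rw [norm_mul]
  exact mul_le_mul_of_nonneg_right (fb.norm_coe_le_norm x) (norm_nonneg _)

noncomputable def mulLp (μ : Measure α) (fb : α →ᵇ ℝ) : Lp ℝ 2 μ →L[ℝ] Lp ℝ 2 μ :=
  LinearMap.mkContinuous
    { toFun := fun k => (memA fb k).toLp _
      map_add' := fun k l => by
        show (memA fb (k + l)).toLp _ = (memA fb k).toLp _ + (memA fb l).toLp _
        rw [MemLp.toLp_congr (memA fb (k + l)) ((memA fb k).add (memA fb l))
          (by filter_upwards [Lp.coeFn_add k l] with x hx; simp only [hx, Pi.add_apply, mul_add]),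
          MemLp.toLp_add]
      map_smul' := fun c k => by
        show (memA fb (c • k)).toLp _ = c • (memA fb k).toLp _
        rw [MemLp.toLp_congr (memA fb (c • k)) ((memA fb k).const_smul c)
          (by filter_upwards [Lp.coeFn_smul c k] with x hx; simp [hx]; ring),
          MemLp.toLp_const_smul] }
    ‖fb‖ (fun k => by
      show ‖(memA fb k).toLp _‖ ≤ ‖fb‖ * ‖k‖
      rw [Lp.norm_toLp]
      have hb : eLpNorm (fun x => fb x * (k : α → ℝ) x) 2 μ ≤ ‖fb‖₊ • eLpNorm (k : α → ℝ) 2 μ := by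
        refine eLpNorm_le_nnreal_smul_eLpNorm_of_ae_le_mul
          (Filter.Eventually.of_forall fun x => ?_) 2
        calc ‖fb x * (k : α → ℝ) x‖₊ = ‖fb x‖₊ * ‖(k : α → ℝ) x‖₊ := nnnorm_mul _ _
          _ ≤ ‖fb‖₊ * ‖(k : α → ℝ) x‖₊ :=
            mul_le_mul_of_nonneg_right (fb.nnnorm_coe_le_nnnorm x) zero_le
      calc (eLpNorm (fun x => fb x * (k : α → ℝ) x) 2 μ).toReal
          ≤ (‖fb‖₊ • eLpNorm (k : α → ℝ) 2 μ).toReal :=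
            ENNReal.toReal_mono (by
              simp only [ENNReal.smul_def, smul_eq_mul]
              exact ENNReal.mul_ne_top ENNReal.coe_ne_top (Lp.memLp k).2.ne) hb
        _ = ‖fb‖ * ‖k‖ := by
            rw [ENNReal.smul_def, smul_eq_mul, ENNReal.toReal_mul, Lp.norm_def]
            simp)

lemma coeFn_mulLp (fb : α →ᵇ ℝ) (k : Lp ℝ 2 μ) :
    (mulLp μ fb k : α → ℝ) =ᵐ[μ] fun x => fb x * (k : α → ℝ) x :=
  (memA fb k).coeFn_toLp

lemma inner_mulLp (fb : α →ᵇ ℝ) (k l : Lp ℝ 2 μ) :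
    ⟪mulLp μ fb k, l⟫_ℝ = ∫ x, fb x * (k : α → ℝ) x * (l : α → ℝ) x ∂μ := by
  rw [L2.inner_def]
  refine integral_congr_ae ?_
  filter_upwards [coeFn_mulLp fb k] with x hx
  simp [hx, RCLike.inner_apply, starRingEnd_apply]
  ring

lemma inner_self_eq_integral_sq (k : Lp ℝ 2 μ) :
    ⟪k, k⟫_ℝ = ∫ x, (k : α → ℝ) x ^ 2 ∂μ := by
  rw [L2.inner_def]
  refine integral_congr_ae (Filter.Eventually.of_forall fun x => ?_)
  simp [RCLike.inner_apply, starRingEnd_apply, sq]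

lemma integrable_sq (k : Lp ℝ 2 μ) : Integrable (fun x => (k : α → ℝ) x ^ 2) μ := by
  have := L2.integrable_inner (𝕜 := ℝ) k k
  refine this.congr (Filter.Eventually.of_forall fun x => ?_)
  simp [RCLike.inner_apply, starRingEnd_apply, sq]

lemma integral_psi (fb : α →ᵇ ℝ) (k : Lp ℝ 2 μ) (hk : (0:ℝ) < ‖k‖) :
    ∫ y, fb y ∂((∫⁻ x, ENNReal.ofReal ((k : α → ℝ) x ^ 2) ∂μ)⁻¹ •
        μ.withDensity (fun x => ENNReal.ofReal ((k : α → ℝ) x ^ 2))) =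
      ⟪mulLp μ fb k, k⟫_ℝ / ⟪k, k⟫_ℝ := by
  have hpos : (0:ℝ) < ⟪k, k⟫_ℝ := by rw [real_inner_self_eq_norm_sq]; positivity
  have hI : (∫⁻ x, ENNReal.ofReal ((k : α → ℝ) x ^ 2) ∂μ) = ENNReal.ofReal ⟪k, k⟫_ℝ := by
    rw [inner_self_eq_integral_sq,
      ← ofReal_integral_eq_lintegral_ofReal (integrable_sq k)
        (Filter.Eventually.of_forall fun x => sq_nonneg _)]
  have hmeas : AEMeasurable (fun x => ((k : α → ℝ) x ^ 2).toNNReal) μ :=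
    (((Lp.aestronglyMeasurable k).aemeasurable.pow_const 2)).real_toNNReal
  have hwd : ∫ y, fb y ∂(μ.withDensity (fun x => ENNReal.ofReal ((k : α → ℝ) x ^ 2))) =
      ∫ x, (k : α → ℝ) x ^ 2 * fb x ∂μ := by
    have : (fun x => ENNReal.ofReal ((k : α → ℝ) x ^ 2)) =
        fun x => (((k : α → ℝ) x ^ 2).toNNReal : ℝ≥0∞) := rfl
    rw [this, integral_withDensity_eq_integral_smul₀ hmeas]
    refine integral_congr_ae (Filter.Eventually.of_forall fun x => ?_)
    simp [NNReal.smul_def, Real.coe_toNNReal _ (sq_nonneg _)]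
  rw [integral_smul_measure, hwd, hI, ENNReal.toReal_inv, ENNReal.toReal_ofReal hpos.le,
    inner_mulLp]
  rw [smul_eq_mul, div_eq_inv_mul]
  congr 1
  refine integral_congr_ae (Filter.Eventually.of_forall fun x => ?_)
  ring

lemma selfadj_mulLp (fb : α →ᵇ ℝ) (k l : Lp ℝ 2 μ) :
    ⟪mulLp μ fb k, l⟫_ℝ = ⟪mulLp μ fb l, k⟫_ℝ := by
  rw [inner_mulLp, inner_mulLp]
  exact integral_congr_ae (Filter.Eventually.of_forall fun x => by ring)


lemma coeFn_sum' {ι : Type*} (s : Finset ι) (F : ι → Lp ℝ 2 μ) :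
    ((∑ i ∈ s, F i : Lp ℝ 2 μ) : α → ℝ) =ᵐ[μ] fun x => ∑ i ∈ s, (F i : α → ℝ) x := by
  classical
  induction s using Finset.induction with
  | empty => simp only [Finset.sum_empty]; exact Lp.coeFn_zero ℝ 2 μ
  | insert a s hnot ih =>
      rw [Finset.sum_insert hnot]
      filter_upwards [Lp.coeFn_add (F a) (∑ i ∈ s, F i), ih] with x h1 h2
      rw [h1, Pi.add_apply, h2, Finset.sum_insert hnot]


noncomputable def valF (μ : Measure α) {n : ℕ} (f : Fin n → α →ᵇ ℝ) (k : Lp ℝ 2 μ)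
    (i : Fin n) : ℝ :=
  ⟪mulLp μ (f i) k, k⟫_ℝ * (⟪k, k⟫_ℝ)⁻¹

noncomputable def valD (μ : Measure α) {n : ℕ} (f : Fin n → α →ᵇ ℝ) (h : Lp ℝ 2 μ)
    (i : Fin n) : Lp ℝ 2 μ →L[ℝ] ℝ :=
  ⟪mulLp μ (f i) h, h⟫_ℝ • ((-(⟪h, h⟫_ℝ ^ 2)⁻¹) • ((2:ℝ) • innerSL ℝ h)) +
    (⟪h, h⟫_ℝ)⁻¹ • ((2:ℝ) • innerSL ℝ (mulLp μ (f i) h))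


lemma hasFDerivAt_valF {n : ℕ} (f : Fin n → α →ᵇ ℝ) (h : Lp ℝ 2 μ) (hne : h ≠ 0) :
    HasFDerivAt (valF μ f) (ContinuousLinearMap.pi (valD μ f h)) h := by
  have hpos : (0:ℝ) < ⟪h, h⟫_ℝ := by
    rw [real_inner_self_eq_norm_sq]
    have : (0:ℝ) < ‖h‖ := norm_pos_iff.2 hne
    positivity
  have hQ : ∀ i, HasFDerivAt (fun k : Lp ℝ 2 μ => ⟪mulLp μ (f i) k, k⟫_ℝ)
      ((2:ℝ) • innerSL ℝ (mulLp μ (f i) h)) h := by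
    intro i
    have h1 := ((mulLp μ (f i)).hasFDerivAt (x := h)).inner ℝ (hasFDerivAt_id h)
    refine h1.congr_fderiv ?_
    ext k
    simp only [ContinuousLinearMap.comp_apply, ContinuousLinearMap.prod_apply,
      fderivInnerCLM_apply, ContinuousLinearMap.smul_apply, innerSL_apply_apply,
      ContinuousLinearMap.coe_id', id_eq, smul_eq_mul]
    rw [selfadj_mulLp (l := h)]
    ring
  have hN : HasFDerivAt (fun k : Lp ℝ 2 μ => ⟪k, k⟫_ℝ) ((2:ℝ) • innerSL ℝ h) h := by
    have h1 := (hasFDerivAt_id h).inner ℝ (hasFDerivAt_id h)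
    refine h1.congr_fderiv ?_
    ext k
    simp only [ContinuousLinearMap.comp_apply, ContinuousLinearMap.prod_apply,
      fderivInnerCLM_apply, ContinuousLinearMap.smul_apply, innerSL_apply_apply,
      ContinuousLinearMap.coe_id', id_eq, smul_eq_mul]
    rw [real_inner_comm k h]
    ring
  have hInv : HasFDerivAt (fun k : Lp ℝ 2 μ => (⟪k, k⟫_ℝ)⁻¹)
      ((-(⟪h, h⟫_ℝ ^ 2)⁻¹) • ((2:ℝ) • innerSL ℝ h)) h :=
    HasDerivAt.comp_hasFDerivAt (f := fun k : Lp ℝ 2 μ => ⟪k, k⟫_ℝ) h (hasDerivAt_inv hpos.ne') hN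
  refine hasFDerivAt_pi.2 fun i => ?_
  exact (hQ i).mul hInv

end aux

/-- Chain rule for the normalized map `Ψ(h) = h²λ/λ(h²)` : for a cylindrical function
`u(μ) = g(μ(f₁),…,μ(f_n))` on probability measures, `u∘Ψ` is Fréchet differentiable at any
nonzero `h ∈ L²(λ)` with gradient `(2h/‖h‖²)·D̃^E u(Ψ(h))`, where
`D̃^E u(μ)(x) = Σᵢ ∂ᵢg(μ(f₁),…,μ(f_n))·(fᵢ(x) − μ(fᵢ))`. -/
theorem stmt_14 (d : ℕ) (lam : Measure (EuclideanSpace ℝ (Fin d))) [SigmaFinite lam]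
    (n : ℕ) (f : Fin n → (EuclideanSpace ℝ (Fin d)) →ᵇ ℝ) (g : (Fin n → ℝ) → ℝ)
    (hg : ContDiff ℝ 1 g) (hgb : ∃ C, ∀ v, |g v| ≤ C)
    (hgb' : ∃ C, ∀ v, ‖fderiv ℝ g v‖ ≤ C)
    (Ψ : Lp ℝ 2 lam → Measure (EuclideanSpace ℝ (Fin d)))
    (hΨ : ∀ h : Lp ℝ 2 lam, Ψ h =
      (∫⁻ x, ENNReal.ofReal ((h : EuclideanSpace ℝ (Fin d) → ℝ) x ^ 2) ∂lam)⁻¹ •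
        lam.withDensity (fun x => ENNReal.ofReal ((h : EuclideanSpace ℝ (Fin d) → ℝ) x ^ 2)))
    (U : Lp ℝ 2 lam → ℝ) (hU : ∀ h, U h = g (fun i => ∫ y, f i y ∂(Ψ h)))
    (h : Lp ℝ 2 lam) (hne : h ≠ 0) :
    ∃ G : Lp ℝ 2 lam, HasGradientAt U G h ∧
      ∀ᵐ x ∂lam, (G : EuclideanSpace ℝ (Fin d) → ℝ) x =
        (2 * (h : EuclideanSpace ℝ (Fin d) → ℝ) x / ‖h‖ ^ 2) *
          (∑ i, fderiv ℝ g (fun i => ∫ y, f i y ∂(Ψ h)) (Pi.single i 1) *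
            (f i x - ∫ y, f i y ∂(Ψ h))) := by
  classical
  have hnorm : (0:ℝ) < ‖h‖ := norm_pos_iff.2 hne
  have hpos : (0:ℝ) < ⟪h, h⟫_ℝ := by rw [real_inner_self_eq_norm_sq]; positivity
  -- identification of the integrals with valF
  have hval : ∀ k : Lp ℝ 2 lam, k ≠ 0 → ∀ i, (∫ y, f i y ∂(Ψ k)) = valF lam f k i := by
    intro k hk i
    rw [hΨ k, integral_psi (f i) k (norm_pos_iff.2 hk), valF, div_eq_mul_inv]
  set a : Fin n → ℝ := fun i => fderiv ℝ g (valF lam f h) (Pi.single i 1) with ha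
  set G : Lp ℝ 2 lam :=
    (2 * (⟪h, h⟫_ℝ)⁻¹) • ∑ i, a i • (mulLp lam (f i) h - valF lam f h i • h) with hG
  -- the composite derivative equals toDual G
  have hDG : (fderiv ℝ g (valF lam f h)).comp (ContinuousLinearMap.pi (valD lam f h)) =
      (InnerProductSpace.toDual ℝ (Lp ℝ 2 lam)) G := by
    ext k
    rw [ContinuousLinearMap.comp_apply, InnerProductSpace.toDual_apply_apply]
    rw [show (ContinuousLinearMap.pi (valD lam f h) k) =
        ∑ i : Fin n, (valD lam f h i k) • (Pi.single i 1 : Fin n → ℝ) from by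
          rw [pi_eq_sum_univ ((ContinuousLinearMap.pi (valD lam f h)) k)]
          refine Finset.sum_congr rfl fun i _ => ?_
          congr 1
          funext j
          simp [Pi.single_apply, eq_comm],
      map_sum]
    simp_rw [_root_.map_smul, smul_eq_mul]
    rw [hG, real_inner_smul_left, sum_inner]
    rw [Finset.mul_sum]
    refine Finset.sum_congr rfl fun i _ => ?_
    rw [real_inner_smul_left, inner_sub_left, real_inner_smul_left]
    rw [valD]
    simp only [ContinuousLinearMap.add_apply, ContinuousLinearMap.smul_apply,
      innerSL_apply_apply, smul_eq_mul]
    rw [valF]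
    field_simp
    ring
  have hUder : HasFDerivAt U ((InnerProductSpace.toDual ℝ (Lp ℝ 2 lam)) G) h := by
    have hgd : HasFDerivAt g (fderiv ℝ g (valF lam f h)) (valF lam f h) :=
      ((hg.differentiable one_ne_zero) (valF lam f h)).hasFDerivAt
    have hcomp := hgd.comp h (hasFDerivAt_valF f h hne)
    rw [← hDG]
    refine hcomp.congr_of_eventuallyEq ?_
    have hmem : {k : Lp ℝ 2 lam | k ≠ 0} ∈ nhds h := by
      have : IsOpen {k : Lp ℝ 2 lam | k ≠ 0} := isOpen_compl_singleton
      exact this.mem_nhds hne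
    filter_upwards [hmem] with k hk
    rw [hU k]
    have : (fun i => ∫ y, f i y ∂(Ψ k)) = valF lam f k := funext fun i => hval k hk i
    rw [this]
    rfl
  refine ⟨G, hasGradientAt_iff_hasFDerivAt.2 hUder, ?_⟩
  -- a.e. identification of G
  have hv : ∀ i, (∫ y, f i y ∂(Ψ h)) = valF lam f h i := hval h hne
  have hae : ∀ᵐ x ∂lam, ∀ i,
      ((a i • (mulLp lam (f i) h - valF lam f h i • h) : Lp ℝ 2 lam) :
        EuclideanSpace ℝ (Fin d) → ℝ) x =
      a i * (f i x * (h : EuclideanSpace ℝ (Fin d) → ℝ) x -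
        valF lam f h i * (h : EuclideanSpace ℝ (Fin d) → ℝ) x) := by
    rw [ae_all_iff]
    intro i
    filter_upwards [Lp.coeFn_smul (a i) (mulLp lam (f i) h - valF lam f h i • h),
      Lp.coeFn_sub (mulLp lam (f i) h) (valF lam f h i • h),
      Lp.coeFn_smul (valF lam f h i) h, coeFn_mulLp (f i) h] with x h1 h2 h3 h4
    rw [h1, Pi.smul_apply, h2, Pi.sub_apply, h3, Pi.smul_apply, h4]
    simp [smul_eq_mul]
  filter_upwards [Lp.coeFn_smul (2 * (⟪h, h⟫_ℝ)⁻¹)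
      (∑ i, a i • (mulLp lam (f i) h - valF lam f h i • h)),
    coeFn_sum' Finset.univ (fun i => a i • (mulLp lam (f i) h - valF lam f h i • h)),
    hae] with x h1 h2 h3
  simp only [hv]
  rw [hG, h1, Pi.smul_apply, h2, smul_eq_mul]
  rw [Finset.mul_sum, Finset.mul_sum]
  refine Finset.sum_congr rfl fun i _ => ?_
  rw [h3 i, real_inner_self_eq_norm_sq]
  have : ‖h‖ ^ 2 ≠ 0 := by positivity
  field_simp
  ring
end

section
/- Let λ be a σ-finite measure on a space M and let u(μ) = g(μ(f₁),…,μ(f_n)) be a cylindrical function on finite measures with g ∈ C¹_b(ℝⁿ), f_i ∈ C_b(M). Let Ψ(h) := h²λ for h ∈ H = L²(λ). Then u∘Ψ is Fréchet differentiable on H with ∇(u∘Ψ)(h) = 2h·D^E u(Ψ(h)), where D^E u(μ) = Σᵢ ∂_i g(μ(f₁),…,μ(f_n))·f_i. In particular, ‖∇(u∘Ψ)(h)‖_H = 2·‖D^E u(Ψ(h))‖_{L²(Ψ(h))}. -/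
open MeasureTheory Filter BoundedContinuousFunction
open Asymptotics
open scoped ENNReal NNReal RealInnerProductSpace Topology

lemma psi_int {M : Type*} [MeasurableSpace M] (lam : Measure M) (h : Lp ℝ 2 lam) (φ : M → ℝ) :
    ∫ x, φ x ∂(lam.withDensity fun x => ENNReal.ofReal ((h : M → ℝ) x ^ 2))
      = ∫ x, φ x * (h : M → ℝ) x ^ 2 ∂lam := by
  have hm : AEMeasurable (fun x => ((h : M → ℝ) x ^ 2).toNNReal) lam :=
    ((Lp.aestronglyMeasurable h).aemeasurable.pow_const 2).real_toNNReal
  rw [show (fun x => ENNReal.ofReal ((h : M → ℝ) x ^ 2))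
      = (fun x => (((h : M → ℝ) x ^ 2).toNNReal : ℝ≥0∞)) from rfl,
    integral_withDensity_eq_integral_smul₀ hm φ]
  refine integral_congr_ae (Eventually.of_forall fun x => ?_)
  simp only [NNReal.smul_def, Real.coe_toNNReal _ (sq_nonneg _), smul_eq_mul]
  ring

section aux
variable {M : Type*} [MeasurableSpace M] [TopologicalSpace M] [OpensMeasurableSpace M]
    (lam : Measure M)

omit [TopologicalSpace M] [OpensMeasurableSpace M] in
lemma sq_int (a b : Lp ℝ 2 lam) :
    Integrable (fun x => (a : M → ℝ) x * (b : M → ℝ) x) lam := by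
  simpa [RCLike.inner_apply, conj_trivial, mul_comm] using L2.integrable_inner (𝕜 := ℝ) a b

lemma key_int (φ : M →ᵇ ℝ) (a b : Lp ℝ 2 lam) :
    Integrable (fun x => φ x * ((a : M → ℝ) x * (b : M → ℝ) x)) lam :=
  (sq_int lam a b).bdd_mul φ.continuous.measurable.aestronglyMeasurable
    (Eventually.of_forall fun x => φ.norm_coe_le_norm x)

lemma bdd_mul_memLp (φ : M →ᵇ ℝ) (a : Lp ℝ 2 lam) :
    MemLp (fun x => φ x * (a : M → ℝ) x) 2 lam := by
  refine (Lp.memLp a).of_le_mul (c := ‖φ‖)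
    (φ.continuous.measurable.aestronglyMeasurable.mul (Lp.aestronglyMeasurable a))
    (Eventually.of_forall fun x => ?_)
  rw [norm_mul]
  exact mul_le_mul_of_nonneg_right (φ.norm_coe_le_norm x) (norm_nonneg _)

end aux

lemma clm_pi_single (n : ℕ) (L : (Fin n → ℝ) →L[ℝ] ℝ) (u : Fin n → ℝ) :
    L u = ∑ i, u i * L (Pi.single i 1) := by
  conv_lhs => rw [← Finset.univ_sum_single u]
  rw [map_sum]
  refine Finset.sum_congr rfl fun i _ => ?_
  have h1 : (Pi.single i (u i) : Fin n → ℝ) = u i • (Pi.single i 1 : Fin n → ℝ) := by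
    rw [← Pi.single_smul, smul_eq_mul, mul_one]
  rw [h1, L.map_smul, smul_eq_mul]

/-- Chain rule for `Ψ(h) = h²λ` : for a cylindrical function `u(μ) = g(μ(f₁),…,μ(f_n))` on
finite measures, `u∘Ψ` is Fréchet differentiable on `H = L²(λ)` with gradient
`2h·D^E u(Ψ(h))`, where `D^E u(μ) = Σᵢ ∂ᵢg(μ(f₁),…,μ(f_n))·fᵢ`; in particular
`‖∇(u∘Ψ)(h)‖_H = 2‖D^E u(Ψ(h))‖_{L²(Ψ(h))}`. -/
theorem stmt_15 {M : Type*} [MeasurableSpace M] [TopologicalSpace M] [OpensMeasurableSpace M]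
    (lam : Measure M) [SigmaFinite lam]
    (n : ℕ) (f : Fin n → M →ᵇ ℝ) (g : (Fin n → ℝ) → ℝ)
    (hg : ContDiff ℝ 1 g) (hgb : ∃ C, ∀ v, |g v| ≤ C)
    (hgb' : ∃ C, ∀ v, ‖fderiv ℝ g v‖ ≤ C)
    (Ψ : Lp ℝ 2 lam → Measure M)
    (hΨ : ∀ h : Lp ℝ 2 lam,
      Ψ h = lam.withDensity (fun x => ENNReal.ofReal ((h : M → ℝ) x ^ 2)))
    (U : Lp ℝ 2 lam → ℝ) (hU : ∀ h, U h = g (fun i => ∫ y, f i y ∂(Ψ h))) :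
    ∀ h : Lp ℝ 2 lam, ∃ G : Lp ℝ 2 lam, HasGradientAt U G h ∧
      (∀ᵐ x ∂lam, (G : M → ℝ) x =
        2 * (h : M → ℝ) x *
          (∑ i, fderiv ℝ g (fun i => ∫ y, f i y ∂(Ψ h)) (Pi.single i 1) * f i x)) ∧
      ‖G‖ = 2 * Real.sqrt (∫ x,
        (∑ i, fderiv ℝ g (fun i => ∫ y, f i y ∂(Ψ h)) (Pi.single i 1) * f i x) ^ 2 ∂(Ψ h)) := by
  intro h
  classical
  set v : Fin n → ℝ := fun i => ∫ y, f i y ∂(Ψ h) with hv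
  set Sb : M →ᵇ ℝ := ∑ i, fderiv ℝ g v (Pi.single i 1) • f i with hSbdef
  have hSbx : ∀ x : M, (∑ i, fderiv ℝ g v (Pi.single i 1) * f i x) = Sb x := by
    intro x; rw [hSbdef]; simp
  -- the map F
  set F : Lp ℝ 2 lam → Fin n → ℝ :=
    fun y i => ∫ x, f i x * ((y : M → ℝ) x * (y : M → ℝ) x) ∂lam with hFdef
  have psi : ∀ (y : Lp ℝ 2 lam) (i : Fin n), (∫ z, f i z ∂(Ψ y)) = F y i := by
    intro y i
    rw [hΨ y, psi_int lam y (f i), hFdef]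
    exact integral_congr_ae (Eventually.of_forall fun x => by ring)
  have hvF : v = F h := by rw [hv]; funext i; exact psi h i
  -- the elements w i representing the partial derivatives of F
  set w : Fin n → Lp ℝ 2 lam :=
    fun i => (2 : ℝ) • ((bdd_mul_memLp lam (f i) h).toLp _) with hwdef
  have hwcoe : ∀ i, (w i : M → ℝ) =ᵐ[lam]
      fun x => 2 * (f i x * (h : M → ℝ) x) := by
    intro i
    rw [hwdef]
    filter_upwards [Lp.coeFn_smul (2 : ℝ) ((bdd_mul_memLp lam (f i) h).toLp _),
      (bdd_mul_memLp lam (f i) h).coeFn_toLp] with x h1 h2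
    simp only [h1, Pi.smul_apply, smul_eq_mul, h2]
  have hwinner : ∀ (i : Fin n) (k : Lp ℝ 2 lam),
      ⟪w i, k⟫ = ∫ x, 2 * (f i x * ((h : M → ℝ) x * (k : M → ℝ) x)) ∂lam := by
    intro i k
    rw [L2.inner_def]
    refine integral_congr_ae ?_
    filter_upwards [hwcoe i] with x hx
    simp only [RCLike.inner_apply, conj_trivial, hx]
    ring
  -- derivative of each component of F
  have hFi : ∀ i : Fin n, HasFDerivAt (fun y => F y i) (innerSL ℝ (w i)) h := by
    intro i
    rw [hasFDerivAt_iff_isLittleO_nhds_zero]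
    have heq : ∀ k : Lp ℝ 2 lam, F (h + k) i - F h i - (innerSL ℝ (w i)) k
        = ∫ x, f i x * ((k : M → ℝ) x * (k : M → ℝ) x) ∂lam := by
      intro k
      have hc : ((h + k : Lp ℝ 2 lam) : M → ℝ) =ᵐ[lam]
          fun x => (h : M → ℝ) x + (k : M → ℝ) x := Lp.coeFn_add h k
      have e1 : F (h + k) i = ∫ x, (f i x * ((h : M → ℝ) x * (h : M → ℝ) x)
          + (2 * (f i x * ((h : M → ℝ) x * (k : M → ℝ) x))
            + f i x * ((k : M → ℝ) x * (k : M → ℝ) x))) ∂lam := by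
        rw [hFdef]
        refine integral_congr_ae ?_
        filter_upwards [hc] with x hx
        rw [hx]; ring
      have i1 : Integrable (fun x => f i x * ((h : M → ℝ) x * (h : M → ℝ) x)) lam :=
        key_int lam (f i) h h
      have i2 : Integrable (fun x => 2 * (f i x * ((h : M → ℝ) x * (k : M → ℝ) x))) lam :=
        (key_int lam (f i) h k).const_mul 2
      have i3 : Integrable (fun x => f i x * ((k : M → ℝ) x * (k : M → ℝ) x)) lam :=
        key_int lam (f i) k k
      have i23 : Integrable (fun x => 2 * (f i x * ((h : M → ℝ) x * (k : M → ℝ) x))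
          + f i x * ((k : M → ℝ) x * (k : M → ℝ) x)) lam := i2.add i3
      rw [e1, integral_add i1 i23, integral_add i2 i3,
        innerSL_apply_apply, hwinner i k, hFdef]
      ring
    have hbig : (fun k : Lp ℝ 2 lam => F (h + k) i - F h i - (innerSL ℝ (w i)) k)
        =O[𝓝 0] fun k => ‖k‖ ^ 2 := by
      refine IsBigO.of_bound ‖f i‖ (Eventually.of_forall fun k => ?_)
      rw [heq k]
      have hkk : ∫ x, (k : M → ℝ) x * (k : M → ℝ) x ∂lam = ‖k‖ ^ 2 := by
        have h1 : ⟪k, k⟫ = ∫ x, (k : M → ℝ) x * (k : M → ℝ) x ∂lam := by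
          rw [L2.inner_def]
          exact integral_congr_ae (Eventually.of_forall fun x => by
            simp [RCLike.inner_apply, conj_trivial, pow_two])
        rw [← h1, real_inner_self_eq_norm_sq]
      have h2 : ‖∫ x, f i x * ((k : M → ℝ) x * (k : M → ℝ) x) ∂lam‖
          ≤ ∫ x, ‖f i‖ * ((k : M → ℝ) x * (k : M → ℝ) x) ∂lam := by
        refine norm_integral_le_of_norm_le ((sq_int lam k k).const_mul _)
          (Eventually.of_forall fun x => ?_)
        rw [norm_mul, Real.norm_of_nonneg (mul_self_nonneg _)]
        exact mul_le_mul_of_nonneg_right ((f i).norm_coe_le_norm x) (mul_self_nonneg _)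
      refine h2.trans ?_
      rw [integral_const_mul, hkk, Real.norm_of_nonneg (by positivity)]
    refine hbig.trans_isLittleO ?_
    rw [isLittleO_iff]
    intro ε hε
    filter_upwards [Metric.ball_mem_nhds (0 : Lp ℝ 2 lam) hε] with k hk
    rw [Metric.mem_ball, dist_zero_right] at hk
    have : ‖‖k‖ ^ 2‖ = ‖k‖ * ‖k‖ := by
      rw [Real.norm_of_nonneg (by positivity), pow_two]
    rw [this]
    nlinarith [norm_nonneg k]
  -- full derivative of F and of U
  set Fp : Lp ℝ 2 lam →L[ℝ] (Fin n → ℝ) :=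
    ContinuousLinearMap.pi (fun i => innerSL ℝ (w i)) with hFpdef
  have hFd : HasFDerivAt F Fp h := by
    refine hasFDerivAt_pi'' fun i => ?_
    rw [hFpdef, ContinuousLinearMap.proj_pi]
    exact hFi i
  have hU' : HasFDerivAt U ((fderiv ℝ g v).comp Fp) h := by
    have hUeq : U = fun y => g (F y) := funext fun y => by
      rw [hU y]; congr 1; funext i; exact psi y i
    rw [hUeq, hvF]
    exact ((hg.differentiable one_ne_zero (F h)).hasFDerivAt).comp h hFd
  -- the gradient G
  set Gm : MemLp (fun x => ((2 : ℝ) • Sb) x * (h : M → ℝ) x) 2 lam :=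
    bdd_mul_memLp lam ((2 : ℝ) • Sb) h with hGmdef
  set G : Lp ℝ 2 lam := Gm.toLp _ with hGdef
  have hGcoe : (G : M → ℝ) =ᵐ[lam] fun x => 2 * (h : M → ℝ) x * Sb x := by
    rw [hGdef]
    filter_upwards [Gm.coeFn_toLp] with x hx
    rw [hx]
    simp only [BoundedContinuousFunction.coe_smul, Pi.smul_apply, smul_eq_mul]
    ring
  have hdual : (InnerProductSpace.toDual ℝ (Lp ℝ 2 lam)) G = (fderiv ℝ g v).comp Fp := by
    refine ContinuousLinearMap.ext fun k => ?_
    rw [InnerProductSpace.toDual_apply_apply]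
    have hRHS : ((fderiv ℝ g v).comp Fp) k
        = ∑ i, ⟪w i, k⟫ * fderiv ℝ g v (Pi.single i 1) := by
      rw [ContinuousLinearMap.comp_apply, clm_pi_single n (fderiv ℝ g v) (Fp k)]
      refine Finset.sum_congr rfl fun i _ => ?_
      rw [hFpdef]
      simp [ContinuousLinearMap.pi_apply, innerSL_apply_apply]
    rw [hRHS, L2.inner_def]
    have hae : ∀ᵐ x ∂lam, ⟪(G : M → ℝ) x, (k : M → ℝ) x⟫
        = ∑ i, fderiv ℝ g v (Pi.single i 1)
            * (2 * (f i x * ((h : M → ℝ) x * (k : M → ℝ) x))) := by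
      filter_upwards [hGcoe] with x hx
      simp only [RCLike.inner_apply, conj_trivial, hx, ← hSbx x]
      rw [Finset.mul_sum, Finset.mul_sum]
      exact Finset.sum_congr rfl fun i _ => by ring
    rw [integral_congr_ae hae, integral_finset_sum _
      (fun i _ => ((key_int lam (f i) h k).const_mul 2).const_mul _)]
    refine Finset.sum_congr rfl fun i _ => ?_
    rw [integral_const_mul, hwinner i k]
    ring
  refine ⟨G, ?_, ?_, ?_⟩
  · rw [hasGradientAt_iff_hasFDerivAt, hdual]
    exact hU'
  · filter_upwards [hGcoe] with x hx
    rw [hx, hSbx x]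
  · have hpsi2 : ∫ x, Sb x ^ 2 ∂(Ψ h)
        = ∫ x, Sb x ^ 2 * (h : M → ℝ) x ^ 2 ∂lam := by
      rw [hΨ h]; exact psi_int lam h (fun x => Sb x ^ 2)
    have hGG : ⟪G, G⟫ = 4 * ∫ x, Sb x ^ 2 * (h : M → ℝ) x ^ 2 ∂lam := by
      rw [L2.inner_def]
      have hae : ∀ᵐ x ∂lam, ⟪(G : M → ℝ) x, (G : M → ℝ) x⟫
          = 4 * (Sb x ^ 2 * (h : M → ℝ) x ^ 2) := by
        filter_upwards [hGcoe] with x hx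
        simp only [RCLike.inner_apply, conj_trivial, hx]
        ring
      rw [integral_congr_ae hae, integral_const_mul]
    calc ‖G‖ = Real.sqrt ⟪G, G⟫ := norm_eq_sqrt_real_inner G
      _ = Real.sqrt (4 * ∫ x, Sb x ^ 2 * (h : M → ℝ) x ^ 2 ∂lam) := by rw [hGG]
      _ = 2 * Real.sqrt (∫ x, Sb x ^ 2 * (h : M → ℝ) x ^ 2 ∂lam) := by
          rw [Real.sqrt_mul (by norm_num), show (4 : ℝ) = 2 ^ 2 by norm_num,
            Real.sqrt_sq (by norm_num)]
      _ = 2 * Real.sqrt (∫ x, (∑ i, fderiv ℝ g v (Pi.single i 1) * f i x) ^ 2 ∂(Ψ h)) := by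
          congr 1
          rw [hΨ h, psi_int lam h (fun x => (∑ i, fderiv ℝ g v (Pi.single i 1) * f i x) ^ 2)]
          congr 1
          refine integral_congr_ae (Eventually.of_forall fun x => ?_)
          simp only [hSbx]
end
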